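/- Let D be a repetitive Delone set in ℝ^d with finite local complexity (FLC). Suppose that for all R1, R2 > 0 and all ε > 0 there exist L1, L2 > 0 with |L1 − R1| < ε and |L2 − R2| < ε such that D has (L1,L2)-stripe structure. Then 0 is a limit point of the set G_D = {a ∈ ℝ^d : χ_a is weakly D-equivariant} (i.e. 0 ∈ closure(G_D \ {0})); by a theorem of Kellendonk–Sadun, G_D is exactly the group of topological eigenvalues of the hull dynamical system of D. -/

import Mathlib

open Metric Set
open scoped RealInnerProductSpace

noncomputable section

/-- Euclidean space `ℝ^d`. -/
abbrev Euc (d : ℕ) := EuclideanSpace ℝ (Fin d)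

variable {d : ℕ}

/-- The transl `D - x = {y - x : y ∈ D}` of a subset of `ℝ^d`. -/
def transl (D : Set (Euc d)) (x : Euc d) : Set (Euc d) := (fun y => y - x) '' D

/-- The metric `ρ_𝕋` on `𝕋` pulled back along `θ ↦ e^{2πiθ}`:
`ρ_𝕋(e^{2πiθ}, e^{2πiθ'}) = min_{n ∈ ℤ} |θ - θ' + n|`. -/
def rhoT (θ θ' : ℝ) : ℝ := sInf { r : ℝ | ∃ n : ℤ, r = |θ - θ' + (n : ℝ)| }

/-- The character `χ_a(x) = exp(2πi⟨x,a⟩)` is weakly `D`-equivariant: for every `ε > 0`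
there is `R > 0` such that `(D-x) ∩ B(0,R) = (D-y) ∩ B(0,R)` implies
`ρ_𝕋(χ_a x, χ_a y) < ε`. -/
def WeaklyEquivariant (D : Set (Euc d)) (a : Euc d) : Prop :=
  ∀ ε > 0, ∃ R > 0, ∀ x y : Euc d,
    transl D x ∩ closedBall 0 R = transl D y ∩ closedBall 0 R →
    rhoT (⟪x, a⟫) (⟪y, a⟫) < ε

/-- The stripe `S(a,b,L1,L2) = {x : ⟨x-b,a⟩ ∈ L1·ℤ + [-L2,L2]}`. -/
def stripeSet (a b : Euc d) (L1 L2 : ℝ) : Set (Euc d) :=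
  { x | ∃ n : ℤ, ∃ t ∈ Icc (-L2) L2, (⟪x - b, a⟫) = L1 * n + t }

/-- `D` has `(L1,L2)`-stripe structure with direction `a` and radius `R`. -/
def StripeStructureWith (D : Set (Euc d)) (a : Euc d) (L1 L2 R : ℝ) : Prop :=
  ∀ x : Euc d,
    { y : Euc d | transl D x ∩ closedBall 0 R = transl D y ∩ closedBall 0 R }
      ⊆ stripeSet a x L1 L2

/-- `D` has `(L1,L2)`-stripe structure. -/
def HasStripeStructure (D : Set (Euc d)) (L1 L2 : ℝ) : Prop :=
  ∃ a : Euc d, ‖a‖ = 1 ∧ ∃ R > 0, StripeStructureWith D a L1 L2 R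

/-- `D` is `r`-uniformly discrete. -/
def UnifDiscrete (D : Set (Euc d)) (r : ℝ) : Prop :=
  ∀ x ∈ D, ∀ y ∈ D, x ≠ y → r < dist x y

/-- `D` is `R`-relatively dense. -/
def RelDense (D : Set (Euc d)) (R : ℝ) : Prop :=
  ∀ x : Euc d, ∃ y ∈ D, dist x y < R

/-- `D` is an `(R,r)`-Delone set. -/
def IsDeloneWith (D : Set (Euc d)) (R r : ℝ) : Prop :=
  0 < R ∧ 0 < r ∧ RelDense D R ∧ UnifDiscrete D r

/-- `D` is a Delone set. -/
def IsDelone (D : Set (Euc d)) : Prop := ∃ R r : ℝ, IsDeloneWith D R r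

/-- `D` has finite local complexity: for every compact `K`, the family
`{(D-x) ∩ K : x ∈ ℝ^d}` is finite modulo translation. -/
def FLC (D : Set (Euc d)) : Prop :=
  ∀ K : Set (Euc d), IsCompact K →
    ∃ F : Set (Set (Euc d)), F.Finite ∧
      ∀ x : Euc d, ∃ P ∈ F, ∃ t : Euc d, transl D x ∩ K = transl P t

/-- `D` is repetitive. -/
def Repetitive (D : Set (Euc d)) : Prop :=
  ∀ K : Set (Euc d), IsCompact K →
    ∃ R > 0, RelDense { x : Euc d | transl D x ∩ K = D ∩ K } R

/-- `D2` is locally derivable from `D1` (`D1 ⟶ D2`). -/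
def LocDerivable (D1 D2 : Set (Euc d)) : Prop :=
  ∃ R0 ≥ (0 : ℝ), ∀ x y : Euc d, ∀ L ≥ (0 : ℝ),
    transl D1 x ∩ closedBall 0 (L + R0) = transl D1 y ∩ closedBall 0 (L + R0) →
    transl D2 x ∩ closedBall 0 L = transl D2 y ∩ closedBall 0 L

/-!
For a stripe structure of period `L1` and width `L2 < L1 / 4` in the direction `u`, put
`a = L1⁻¹ • u`, of norm `1 / L1`. Points with the same `R`-patch then have phases `⟪·, a⟫`
differing by at most `L2 / L1 < 1 / 4` modulo `ℤ`. Repetitivity upgrades this uniform bound to weak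
equivariance: if pairs with arbitrarily large common patches had phase difference `≥ ε`, then
`k` such jumps, each placed near an occurrence of the pattern produced so far, would concatenate
into a single pair with phase difference `≥ k ε`, contradicting the bound for `k ε > L2 / L1`.
Letting `L1 → ∞` gives eigenvalues `a ≠ 0` arbitrarily close to `0`.
-/

section Round

variable {α : Type*} [Field α] [LinearOrder α] [IsStrictOrderedRing α] [FloorRing α]

theorem round_eq_of_abs_sub_lt_half {x : α} {n : ℤ} (h : |x - n| < 1 / 2) : round x = n := by
  obtain ⟨h₁, h₂⟩ := abs_lt.mp h
  exact round_eq_iff.mpr ⟨by linarith, by linarith⟩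

theorem round_neg_of_abs_sub_round_lt_half {x : α} (h : |x - round x| < 1 / 2) :
    round (-x) = -round x :=
  round_eq_of_abs_sub_lt_half (by rwa [Int.cast_neg, neg_sub_neg, abs_sub_comm])

theorem round_add_of_abs_sub_round_add_lt_half {x y : α}
    (h : |x - round x| + |y - round y| < 1 / 2) : round (x + y) = round x + round y := by
  refine round_eq_of_abs_sub_lt_half (lt_of_le_of_lt ?_ h)
  rw [Int.cast_add, add_sub_add_comm]
  exact abs_add_le _ _

end Round

theorem rhoT_le_abs_sub_add_intCast (θ θ' : ℝ) (n : ℤ) : rhoT θ θ' ≤ |θ - θ' + n| :=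
  csInf_le ⟨0, by rintro r ⟨m, rfl⟩; positivity⟩ ⟨n, rfl⟩

def phase (a v : Euc d) : ℝ := ⟪v, a⟫ - round ⟪v, a⟫

theorem abs_phase_le_abs_inner_sub_intCast (a v : Euc d) (n : ℤ) :
    |phase a v| ≤ |⟪v, a⟫ - n| :=
  round_le _ n

@[simp]
theorem phase_zero (a : Euc d) : phase a 0 = 0 := by
  simp [phase]

theorem phase_add {a v w : Euc d} (h : |phase a v| + |phase a w| < 1 / 2) :
    phase a (v + w) = phase a v + phase a w := by
  simp only [phase, inner_add_left, round_add_of_abs_sub_round_add_lt_half h, Int.cast_add]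
  ring

theorem phase_neg {a v : Euc d} (h : |phase a v| < 1 / 2) : phase a (-v) = -phase a v := by
  simp only [phase, inner_neg_left, round_neg_of_abs_sub_round_lt_half h, Int.cast_neg]
  ring

theorem rhoT_le_abs_phase (a x y : Euc d) : rhoT ⟪x, a⟫ ⟪y, a⟫ ≤ |phase a (x - y)| := by
  simpa only [phase, inner_sub_left, Int.cast_neg, ← sub_eq_add_neg] using
    rhoT_le_abs_sub_add_intCast ⟪x, a⟫ ⟪y, a⟫ (-round ⟪x - y, a⟫)

theorem mem_transl {D : Set (Euc d)} {x p : Euc d} : p ∈ transl D x ↔ p + x ∈ D := by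
  simp [transl, sub_eq_iff_eq_add]

@[simp]
theorem transl_zero (D : Set (Euc d)) : transl D 0 = D := by
  simp [transl]

def SamePatch (D : Set (Euc d)) (R : ℝ) (x y : Euc d) : Prop :=
  transl D x ∩ closedBall 0 R = transl D y ∩ closedBall 0 R

theorem samePatch_iff {D : Set (Euc d)} {R : ℝ} {x y : Euc d} :
    SamePatch D R x y ↔ ∀ p : Euc d, ‖p‖ ≤ R → (p + x ∈ D ↔ p + y ∈ D) := by
  simp only [SamePatch, Set.ext_iff, mem_inter_iff, mem_transl, mem_closedBall_zero_iff,
    and_congr_left_iff]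

namespace SamePatch

variable {D : Set (Euc d)} {R S : ℝ} {x y z : Euc d}

@[refl]
theorem refl (D : Set (Euc d)) (R : ℝ) (x : Euc d) : SamePatch D R x x := rfl

@[symm]
theorem symm (h : SamePatch D R x y) : SamePatch D R y x := Eq.symm h

@[trans]
theorem trans (h₁ : SamePatch D R x y) (h₂ : SamePatch D R y z) : SamePatch D R x z :=
  Eq.trans h₁ h₂

theorem mono (h : SamePatch D R x y) (hSR : S ≤ R) : SamePatch D S x y :=
  samePatch_iff.mpr fun p hp => samePatch_iff.mp h p (hp.trans hSR)

theorem add_right (h : SamePatch D R x y) (s : Euc d) :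
    SamePatch D (R - ‖s‖) (x + s) (y + s) := by
  refine samePatch_iff.mpr fun p hp => ?_
  have hps : ‖p + s‖ ≤ R := (norm_add_le p s).trans (by linarith)
  rw [← add_assoc, ← add_assoc, add_right_comm p x, add_right_comm p y]
  exact samePatch_iff.mp h (p + s) hps

/-- A jump `z` realised at `b` can be appended to a jump `w` realised at `x`, once `x`'s pattern
recurs at a point `u` near `b`. -/
theorem append {b u w z : Euc d} {ρ : ℝ} (hxw : SamePatch D S x (x + w))
    (hux : SamePatch D (S + ‖w‖) u x) (hbz : SamePatch D (S + ρ + ‖w‖) b (b + z))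
    (hub : dist u b < ρ) : SamePatch D S u (u + (w + z)) := by
  have hw : SamePatch D S u (u + w) := by
    have hshift : SamePatch D S (u + w) (x + w) := by
      simpa only [add_sub_cancel_right] using hux.add_right w
    exact ((hux.mono (by simp)).trans hxw).trans hshift.symm
  have hz : SamePatch D S (u + w) (u + w + z) := by
    have hdist : ‖u + w - b‖ ≤ ρ + ‖w‖ := by
      rw [add_sub_right_comm]
      exact (norm_add_le _ _).trans (by rw [← dist_eq_norm]; linarith)
    have hshift := hbz.add_right (u + w - b)
    rw [add_sub_cancel, show b + z + (u + w - b) = u + w + z by abel] at hshift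
    exact hshift.mono (by linarith)
  rw [← add_assoc]
  exact hw.trans hz

end SamePatch

theorem Repetitive.exists_samePatch_dist_lt {D : Set (Euc d)} (hrep : Repetitive D)
    (x : Euc d) (S : ℝ) : ∃ ρ > 0, ∀ c : Euc d, ∃ u, SamePatch D S u x ∧ dist u c < ρ := by
  obtain ⟨ρ, hρ, hdense⟩ := hrep (closedBall 0 (‖x‖ + S)) (isCompact_closedBall _ _)
  refine ⟨ρ, hρ, fun c => ?_⟩
  obtain ⟨v, hv, hvc⟩ := hdense (c - x)
  have hv0 : SamePatch D (‖x‖ + S) v 0 := by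
    rw [SamePatch, transl_zero]
    exact hv
  refine ⟨v + x, by simpa using hv0.add_right x, ?_⟩
  rw [dist_comm, dist_eq_norm, sub_sub_eq_add_sub] at hvc
  rwa [dist_eq_norm]

section Accumulation

variable {D : Set (Euc d)} {a : Euc d} {R₀ κ ε : ℝ}

theorem exists_samePatch_le_phase (hκ : κ < 1 / 2)
    (hb : ∀ x y, SamePatch D R₀ x y → |phase a (y - x)| ≤ κ)
    (hnot : ∀ R > 0, ∃ x y, SamePatch D R x y ∧ ε ≤ rhoT ⟪x, a⟫ ⟪y, a⟫) (R : ℝ) :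
    ∃ b z, SamePatch D R b (b + z) ∧ ε ≤ phase a z := by
  obtain ⟨x, y, hxy, hε⟩ := hnot (max (max R R₀) 1) (by positivity)
  have hε' := hε.trans (rhoT_le_abs_phase a x y)
  rcases le_or_gt 0 (phase a (x - y)) with hpos | hneg
  · refine ⟨y, x - y, ?_, by rwa [abs_of_nonneg hpos] at hε'⟩
    rw [add_sub_cancel]
    exact (hxy.mono ((le_max_left _ _).trans (le_max_left _ _))).symm
  · have hyx : |phase a (x - y)| < 1 / 2 :=
      (hb y x (hxy.symm.mono ((le_max_right _ _).trans (le_max_left _ _)))).trans_lt hκ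
    refine ⟨x, y - x, ?_, ?_⟩
    · rw [add_sub_cancel]
      exact hxy.mono ((le_max_left _ _).trans (le_max_left _ _))
    · rw [← neg_sub, phase_neg hyx]
      rw [abs_of_neg hneg] at hε'
      exact hε'

theorem exists_samePatch_natCast_mul_le_phase (hrep : Repetitive D) (hκ : κ < 1 / 4)
    (hb : ∀ x y, SamePatch D R₀ x y → |phase a (y - x)| ≤ κ)
    (hjump : ∀ R, ∃ b z, SamePatch D R b (b + z) ∧ ε ≤ phase a z) (k : ℕ) (S : ℝ) :
    ∃ x w, SamePatch D S x (x + w) ∧ k * ε ≤ phase a w := by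
  have hb' : ∀ {R x w}, R₀ ≤ R → SamePatch D R x (x + w) → |phase a w| ≤ κ :=
    fun hR h => by simpa using hb _ _ (h.mono hR)
  induction k generalizing S with
  | zero => exact ⟨0, 0, by simpa using SamePatch.refl D S 0, by simp⟩
  | succ k ih =>
    obtain ⟨x, w, hxw, hw⟩ := ih (max S R₀)
    obtain ⟨ρ, hρ, hocc⟩ := hrep.exists_samePatch_dist_lt x (max S R₀ + ‖w‖)
    obtain ⟨b, z, hbz, hz⟩ := hjump (max S R₀ + ρ + ‖w‖)
    obtain ⟨u, hux, hub⟩ := hocc b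
    have hwκ := hb' (le_max_right _ _) hxw
    have hzκ := hb' (by linarith [le_max_right S R₀, norm_nonneg w]) hbz
    refine ⟨u, w + z, (hxw.append hux hbz hub).mono (le_max_left _ _), ?_⟩
    rw [phase_add (by linarith)]
    push_cast
    linarith

theorem weaklyEquivariant_of_abs_phase_le (hrep : Repetitive D) (hκ : κ < 1 / 4)
    (hb : ∀ x y, SamePatch D R₀ x y → |phase a (y - x)| ≤ κ) : WeaklyEquivariant D a := by
  intro ε hε
  by_contra! hnot
  have hjump := exists_samePatch_le_phase (by linarith) hb hnot
  obtain ⟨k, hk⟩ := exists_nat_gt (κ / ε)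
  obtain ⟨x, w, hxw, hw⟩ := exists_samePatch_natCast_mul_le_phase hrep hκ hb hjump k R₀
  have hwκ : |phase a w| ≤ κ := by simpa using hb _ _ hxw
  rw [div_lt_iff₀ hε] at hk
  linarith [le_abs_self (phase a w)]

end Accumulation

theorem StripeStructureWith.abs_phase_le {D : Set (Euc d)} {u : Euc d} {L1 L2 R : ℝ}
    (hs : StripeStructureWith D u L1 L2 R) (hL1 : 0 < L1) {x y : Euc d}
    (hxy : SamePatch D R x y) : |phase (L1⁻¹ • u) (y - x)| ≤ L2 / L1 := by
  obtain ⟨n, t, ht, heq⟩ := hs x hxy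
  calc |phase (L1⁻¹ • u) (y - x)| ≤ |⟪y - x, L1⁻¹ • u⟫ - n| :=
        abs_phase_le_abs_inner_sub_intCast _ _ n
    _ = |t| / L1 := by
        rw [real_inner_smul_right, heq, inv_mul_eq_div, add_div, mul_div_cancel_left₀ _ hL1.ne',
          add_sub_cancel_left, abs_div, abs_of_pos hL1]
    _ ≤ L2 / L1 := by gcongr; exact abs_le.mpr ht

theorem weaklyEquivariant_of_stripeStructureWith {D : Set (Euc d)} {u : Euc d} {L1 L2 R : ℝ}
    (hrep : Repetitive D) (hs : StripeStructureWith D u L1 L2 R) (hL1 : 0 < L1)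
    (hL : 4 * L2 < L1) : WeaklyEquivariant D (L1⁻¹ • u) :=
  weaklyEquivariant_of_abs_phase_le hrep (by rw [div_lt_iff₀ hL1]; linarith)
    fun _ _ => hs.abs_phase_le hL1

theorem stmt9_general (d : ℕ) (D : Set (Euc d)) (hrep : Repetitive D)
    (h : ∀ R1 > (0 : ℝ), ∀ R2 > (0 : ℝ), ∀ ε > (0 : ℝ),
      ∃ L1 > (0 : ℝ), ∃ L2 > (0 : ℝ),
        |L1 - R1| < ε ∧ |L2 - R2| < ε ∧ HasStripeStructure D L1 L2) :
    (0 : Euc d) ∈ closure ({ a : Euc d | WeaklyEquivariant D a } \ {0}) := by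
  rw [Metric.mem_closure_iff]
  intro δ hδ
  have hδ' : 0 < δ⁻¹ := inv_pos.mpr hδ
  obtain ⟨L1, hL1, L2, -, hL1near, hL2near, u, hu, R, -, hs⟩ :=
    h (2 * δ⁻¹) (by positivity) (δ⁻¹ / 10) (by positivity) (δ⁻¹ / 10) (by positivity)
  have hL1δ : δ⁻¹ < L1 := by linarith [(abs_lt.mp hL1near).1]
  have hL : 4 * L2 < L1 := by linarith [(abs_lt.mp hL2near).2]
  have hnorm : ‖L1⁻¹ • u‖ = L1⁻¹ := by
    rw [norm_smul, hu, mul_one, norm_inv, Real.norm_of_nonneg hL1.le]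
  refine ⟨L1⁻¹ • u, ⟨weaklyEquivariant_of_stripeStructureWith hrep hs hL1 hL, ?_⟩, ?_⟩
  · rw [mem_singleton_iff, ← norm_eq_zero, hnorm]
    exact (inv_pos.mpr hL1).ne'
  · rw [dist_zero_left, hnorm]
    exact inv_lt_of_inv_lt₀ hδ hL1δ

/-- let `D` be a repetitive FLC Delone set. If for all `R1, R2 > 0` and
`ε > 0` there are `L1, L2 > 0` with `|L1 - R1| < ε`, `|L2 - R2| < ε` and `D` has
`(L1,L2)`-stripe structure, then `0` is a limit point of the set
`G_D = {a : χ_a is weakly D-equivariant}` (the group of topological eigenvalues of the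
hull of `D`, by Kellendonk–Sadun). -/
theorem stmt9 (d : ℕ) (D : Set (Euc d)) (hDel : IsDelone D) (hrep : Repetitive D)
    (hFLC : FLC D)
    (h : ∀ R1 > (0 : ℝ), ∀ R2 > (0 : ℝ), ∀ ε > (0 : ℝ),
      ∃ L1 > (0 : ℝ), ∃ L2 > (0 : ℝ),
        |L1 - R1| < ε ∧ |L2 - R2| < ε ∧ HasStripeStructure D L1 L2) :
    (0 : Euc d) ∈ closure ({ a : Euc d | WeaklyEquivariant D a } \ {0}) :=
  stmt9_general d D hrep h
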